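/- arXiv:1509.00924 — 4 statements merged into one kernel-verified Lean document; each statement's English description precedes it below -/
import Mathlib

section
/- Let Γ be a finite undirected graph. If there exist a function F:ℕ→ℕ and an integer ℓ > 1 such that λ_{k₁,…,k_ℓ}(Γ) ≤ F(k₁) for all positive integers k₁,…,k_ℓ, then Γ is a disjoint union of complete graphs (equivalently, every pair of vertices is at distance 0, 1, or ∞). -/
open SimpleGraph

/-- `f` is an `L(k 1, …, k ℓ)`-labelling of `G`: whenever the distance between `u` and `v`
is `t` with `1 ≤ t ≤ ℓ`, the labels differ by at least `k t`. -/
def IsLLabelling {V : Type*} (G : SimpleGraph V) (k : ℕ → ℕ) (ℓ : ℕ) (f : V → ℕ) : Prop :=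
  ∀ u v : V, ∀ t : ℕ, 1 ≤ t → t ≤ ℓ → G.dist u v = t →
    k t ≤ Int.natAbs ((f u : ℤ) - (f v : ℤ))

/-- The minimum span `λ_{k 1, …, k ℓ}(G)` over all `L(k 1, …, k ℓ)`-labellings of `G`. -/
noncomputable def minSpan {V : Type*} [Fintype V] (G : SimpleGraph V)
    (k : ℕ → ℕ) (ℓ : ℕ) : ℕ :=
  sInf {s | ∃ f : V → ℕ, IsLLabelling G k ℓ f ∧
    (Finset.univ.sup fun u : V => Finset.univ.sup fun v : V => f u - f v) = s}

lemma aux_dist_two {V : Type*} (G : SimpleGraph V) :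
    ∀ d : ℕ, 2 ≤ d → ∀ u v : V, G.dist u v = d → ∃ x y : V, G.dist x y = 2 := by
  intro d
  induction d using Nat.strong_induction_on with
  | _ d ih =>
    intro hd u v huv
    rcases eq_or_lt_of_le hd with h2 | h3
    · exact ⟨u, v, h2 ▸ huv⟩
    · have hr : G.Reachable u v := Reachable.of_dist_ne_zero (by omega)
      obtain ⟨p, hp⟩ := hr.exists_walk_length_eq_dist
      rw [huv] at hp
      cases p with
      | nil => simp at hp; omega
      | @cons _ w _ hadj q =>
        simp [Walk.length_cons] at hp
        have hqle : G.dist w v ≤ d - 1 := by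
          have := SimpleGraph.dist_le q; omega
        have hqge : d - 1 ≤ G.dist w v := by
          by_contra hlt
          push_neg at hlt
          have hwr : G.Reachable w v := Reachable.of_dist_ne_zero ?_
          · obtain ⟨q', hq'⟩ := hwr.exists_walk_length_eq_dist
            have := SimpleGraph.dist_le (Walk.cons hadj q')
            rw [Walk.length_cons] at this
            omega
          · -- dist w v ≠ 0 : if w = v then walk cons hadj nil gives dist u v ≤ 1
            intro h0
            have : w = v ∨ ¬ G.Reachable w v := dist_eq_zero_iff_eq_or_not_reachable.mp h0
            rcases this with rfl | hnr
            · have := SimpleGraph.dist_le (Walk.cons hadj Walk.nil)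
              simp at this; omega
            · exact hnr ⟨q⟩
        exact ih (d-1) (by omega) (by omega) w v (by omega)

theorem stmt2 {V : Type*} [Fintype V] (G : SimpleGraph V)
    (h : ∃ (F : ℕ → ℕ) (ℓ : ℕ), 1 < ℓ ∧
      ∀ k : ℕ → ℕ, (∀ t, 1 ≤ t → t ≤ ℓ → 1 ≤ k t) → minSpan G k ℓ ≤ F (k 1)) :
    ∀ u v : V, G.Reachable u v → u = v ∨ G.Adj u v := by
  intro u v hr
  by_contra hcon
  push_neg at hcon
  obtain ⟨hne, hnadj⟩ := hcon
  obtain ⟨F, ℓ, hℓ, hF⟩ := h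
  -- dist u v ≥ 2
  have hd0 : G.dist u v ≠ 0 := by
    intro h0
    rcases dist_eq_zero_iff_eq_or_not_reachable.mp h0 with h | h
    exacts [hne h, h hr]
  have hd1 : G.dist u v ≠ 1 := fun h1 => hnadj (dist_eq_one_iff_adj.mp h1)
  obtain ⟨x, y, hxy⟩ := aux_dist_two G (G.dist u v) (by omega) u v rfl
  -- the labelling weights
  set N := F 1 + 1 with hN
  set k : ℕ → ℕ := fun t => if t ≤ 1 then 1 else N with hk
  have hkpos : ∀ t, 1 ≤ t → t ≤ ℓ → 1 ≤ k t := by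
    intro t _ _; simp only [hk]; split <;> omega
  have hk1 : k 1 = 1 := by simp [hk]
  have hk2 : k 2 = N := by simp [hk]
  have hbound := hF k hkpos
  rw [hk1] at hbound
  -- the set of spans is nonempty
  set S := {s | ∃ f : V → ℕ, IsLLabelling G k ℓ f ∧
    (Finset.univ.sup fun u : V => Finset.univ.sup fun v : V => f u - f v) = s} with hS
  have hSne : S.Nonempty := by
    classical
    set e := (Fintype.equivFin V)
    refine ⟨_, fun w => (e w : ℕ) * N, ?_, rfl⟩
    intro a b t ht1 _ hdab
    have hab : a ≠ b := by
      rintro rfl; rw [SimpleGraph.dist_self] at hdab; omega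
    have heab : (e a : ℕ) ≠ (e b : ℕ) := by
      intro hh; exact hab (e.injective (Fin.ext hh))
    have : N ≤ ((e a : ℕ) * N : ℤ).natAbs - 0 ∨ True := Or.inr trivial
    have hk_le : k t ≤ N := by simp only [hk]; split <;> omega
    refine le_trans hk_le ?_
    have : (((e a : ℕ) * N : ℕ) : ℤ) - (((e b : ℕ) * N : ℕ) : ℤ)
        = (((e a : ℕ) : ℤ) - ((e b : ℕ) : ℤ)) * N := by push_cast; ring
    rw [this, Int.natAbs_mul]
    have h1 : 1 ≤ (((e a : ℕ) : ℤ) - ((e b : ℕ) : ℤ)).natAbs := by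
      rcases lt_or_gt_of_ne heab with hlt | hlt <;> omega
    calc N = 1 * N := (one_mul N).symm
    _ ≤ _ := by
        apply Nat.mul_le_mul h1
        simp
  have hmem : minSpan G k ℓ ∈ S := Nat.sInf_mem hSne
  obtain ⟨f, hlab, hspan⟩ := hmem
  -- apply labelling property at x, y
  have hxy2 := hlab x y 2 (by omega) (by omega) hxy
  rw [hk2] at hxy2
  -- span bounds
  have h1 : f x - f y ≤ minSpan G k ℓ := by
    rw [← hspan]
    calc f x - f y ≤ Finset.univ.sup (fun w => f x - f w) := Finset.le_sup (f := fun w => f x - f w) (Finset.mem_univ y)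
    _ ≤ _ := Finset.le_sup (f := fun a => Finset.univ.sup fun w => f a - f w) (Finset.mem_univ x)
  have h2 : f y - f x ≤ minSpan G k ℓ := by
    rw [← hspan]
    calc f y - f x ≤ Finset.univ.sup (fun w => f y - f w) := Finset.le_sup (f := fun w => f y - f w) (Finset.mem_univ x)
    _ ≤ _ := Finset.le_sup (f := fun a => Finset.univ.sup fun w => f a - f w) (Finset.mem_univ y)
  omega
end

section
/- Let Γ be a finite undirected graph that is a disjoint union of complete graphs, and let n be the largest number of vertices in a connected component of Γ. Then for every ℓ ≥ 1 and all positive integers k₁,…,k_ℓ, λ_{k₁,…,k_ℓ}(Γ) = k₁·(n−1). -/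
open SimpleGraph

/-- A finset of naturals whose elements are pairwise at distance at least `c`
has `max - min ≥ c * (card - 1)`. -/
lemma chainA (c : ℕ) (T : Finset ℕ) (hT : T.Nonempty)
    (hsep : ∀ a ∈ T, ∀ b ∈ T, a ≠ b → c ≤ Int.natAbs ((a : ℤ) - b)) :
    T.min' hT + c * (T.card - 1) ≤ T.max' hT := by
  have claim : ∀ i (hi : i < T.card),
      T.min' hT + c * i ≤ (T.orderIsoOfFin rfl ⟨i, hi⟩ : ℕ) := by
    intro i
    induction i with
    | zero =>
      intro hi
      simpa using T.min'_le _ (T.orderIsoOfFin rfl ⟨0, hi⟩).2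
    | succ j ih =>
      intro hi
      have hj : j < T.card := Nat.lt_of_succ_lt hi
      have h1 := ih hj
      have hlt : (T.orderIsoOfFin rfl ⟨j, hj⟩ : ℕ) <
          (T.orderIsoOfFin rfl ⟨j + 1, hi⟩ : ℕ) := by
        exact_mod_cast (T.orderIsoOfFin rfl).strictMono
          (show (⟨j, hj⟩ : Fin T.card) < ⟨j + 1, hi⟩ by simp [Fin.lt_def])
      have hsep' := hsep _ (T.orderIsoOfFin rfl ⟨j, hj⟩).2 _
        (T.orderIsoOfFin rfl ⟨j + 1, hi⟩).2 (by omega)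
      have hstep : (T.orderIsoOfFin rfl ⟨j, hj⟩ : ℕ) + c ≤
          (T.orderIsoOfFin rfl ⟨j + 1, hi⟩ : ℕ) := by omega
      calc T.min' hT + c * (j + 1) = (T.min' hT + c * j) + c := by ring
        _ ≤ (T.orderIsoOfFin rfl ⟨j, hj⟩ : ℕ) + c := by omega
        _ ≤ _ := hstep
  have hcard : T.card - 1 < T.card := by have := hT.card_pos; omega
  have hlast := claim (T.card - 1) hcard
  have hle := T.le_max' _ (T.orderIsoOfFin rfl ⟨T.card - 1, hcard⟩).2
  omega

theorem stmt3 {V : Type*} [Fintype V] [Nonempty V] (G : SimpleGraph V)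
    (h : ∀ u v : V, G.Reachable u v → u = v ∨ G.Adj u v)
    (n : ℕ) (hn : n = Finset.univ.sup fun v : V => {w | G.Reachable v w}.ncard)
    (k : ℕ → ℕ) (ℓ : ℕ) (hℓ : 1 ≤ ℓ) (hk : ∀ t, 1 ≤ t → t ≤ ℓ → 1 ≤ k t) :
    minSpan G k ℓ = k 1 * (n - 1) := by
  classical
  have hk1 : 1 ≤ k 1 := hk 1 le_rfl hℓ
  -- encoding of vertices
  set enc : V → ℕ := fun v => (Fintype.equivFin V v : ℕ) with henc
  have henc_inj : Function.Injective enc := fun a b hab => by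
    exact (Fintype.equivFin V).injective (Fin.val_injective hab)
  -- index of a vertex within its component
  set idx : V → ℕ := fun v =>
    (Finset.univ.filter (fun w => G.Reachable v w ∧ enc w < enc v)).card with hidx
  -- component cardinality bound
  have hcomp_le : ∀ v : V, {w | G.Reachable v w}.ncard ≤ n := by
    intro v
    rw [hn]
    exact Finset.le_sup (f := fun v : V => {w | G.Reachable v w}.ncard) (Finset.mem_univ v)
  have hncard : ∀ v : V,
      {w | G.Reachable v w}.ncard = (Finset.univ.filter (fun w => G.Reachable v w)).card := by
    intro v
    have : {w | G.Reachable v w} = ↑(Finset.univ.filter (fun w => G.Reachable v w)) := by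
      ext w; simp
    rw [this, Set.ncard_coe_finset]
  -- key monotonicity: reachable, smaller enc gives smaller idx
  have hidx_lt : ∀ u v : V, G.Reachable u v → enc u < enc v → idx u < idx v := by
    intro u v hr he
    simp only [hidx]
    apply Finset.card_lt_card
    constructor
    · intro w hw
      simp only [Finset.mem_filter, Finset.mem_univ, true_and] at hw ⊢
      exact ⟨hr.symm.trans hw.1, lt_trans hw.2 he⟩
    · intro hsub
      have hu : u ∈ Finset.univ.filter (fun w => G.Reachable v w ∧ enc w < enc v) := by
        simp only [Finset.mem_filter, Finset.mem_univ, true_and]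
        exact ⟨hr.symm, he⟩
      have := hsub hu
      simp only [Finset.mem_filter, Finset.mem_univ, true_and] at this
      exact lt_irrefl _ this.2
  -- idx bound
  have hidx_le : ∀ v : V, idx v ≤ n - 1 := by
    intro v
    simp only [hidx]
    have hsub : Finset.univ.filter (fun w => G.Reachable v w ∧ enc w < enc v) ⊆
        (Finset.univ.filter (fun w => G.Reachable v w)).erase v := by
      intro w hw
      simp only [Finset.mem_filter, Finset.mem_univ, true_and] at hw
      refine Finset.mem_erase.2 ⟨?_, by simp [hw.1]⟩
      rintro rfl; exact lt_irrefl _ hw.2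
    have hcards := Finset.card_le_card hsub
    have hvmem : v ∈ Finset.univ.filter (fun w => G.Reachable v w) :=
      Finset.mem_filter.2 ⟨Finset.mem_univ v, Reachable.refl v⟩
    have herase := Finset.card_erase_of_mem hvmem
    have h2 : (Finset.univ.filter (fun w => G.Reachable v w)).card ≤ n := by
      rw [← hncard]; exact hcomp_le v
    omega
  -- the labelling
  set f : V → ℕ := fun v => k 1 * idx v with hf
  have hlab : IsLLabelling G k ℓ f := by
    intro u v t ht1 htℓ hd
    have hne : u ≠ v := by
      rintro rfl
      rw [SimpleGraph.dist_self] at hd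
      omega
    have hr : G.Reachable u v := by
      by_contra hr
      have := SimpleGraph.dist_eq_zero_iff_eq_or_not_reachable.2 (Or.inr hr)
      omega
    have hadj : G.Adj u v := (h u v hr).resolve_left hne
    have ht : t = 1 := by
      have : G.dist u v = 1 := SimpleGraph.dist_eq_one_iff_adj.2 hadj
      omega
    subst ht
    have hidxne : idx u ≠ idx v := by
      have hene : enc u ≠ enc v := fun hE => hne (henc_inj hE)
      rcases lt_or_gt_of_ne hene with hlt | hlt
      · exact ne_of_lt (hidx_lt u v hr hlt)
      · exact (ne_of_lt (hidx_lt v u hr.symm hlt)).symm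
    have h1 : 1 ≤ Int.natAbs ((idx u : ℤ) - (idx v : ℤ)) := by omega
    have key : k 1 ≤ Int.natAbs ((k 1 * idx u : ℤ) - (k 1 * idx v : ℤ)) := by
      have hfac : ((k 1 * idx u : ℤ) - k 1 * idx v) = (k 1 : ℤ) * ((idx u : ℤ) - idx v) := by
        ring
      rw [hfac, Int.natAbs_mul, Int.natAbs_natCast]
      calc k 1 = k 1 * 1 := (mul_one _).symm
        _ ≤ k 1 * Int.natAbs ((idx u : ℤ) - (idx v : ℤ)) := Nat.mul_le_mul_left _ h1
    simp only [hf]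
    push_cast
    convert key using 2
  -- span of f
  set s₀ : ℕ := Finset.univ.sup fun u : V => Finset.univ.sup fun v : V => f u - f v with hs₀
  have hmem : s₀ ∈ {s | ∃ g : V → ℕ, IsLLabelling G k ℓ g ∧
      (Finset.univ.sup fun u : V => Finset.univ.sup fun v : V => g u - g v) = s} :=
    ⟨f, hlab, rfl⟩
  have hs₀le : s₀ ≤ k 1 * (n - 1) := by
    rw [hs₀]
    apply Finset.sup_le
    intro u _
    apply Finset.sup_le
    intro v _
    calc f u - f v ≤ f u := Nat.sub_le _ _
      _ = k 1 * idx u := rfl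
      _ ≤ k 1 * (n - 1) := Nat.mul_le_mul_left _ (hidx_le u)
  -- upper bound for minSpan
  have hub : minSpan G k ℓ ≤ k 1 * (n - 1) :=
    le_trans (Nat.sInf_le hmem) hs₀le
  -- lower bound
  have hlb : k 1 * (n - 1) ≤ minSpan G k ℓ := by
    have hmem' : minSpan G k ℓ ∈ {s | ∃ g : V → ℕ, IsLLabelling G k ℓ g ∧
        (Finset.univ.sup fun u : V => Finset.univ.sup fun v : V => g u - g v) = s} :=
      Nat.sInf_mem (⟨s₀, hmem⟩ : Set.Nonempty _)
    obtain ⟨g, hg, hgspan⟩ := hmem'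
    -- find largest component
    obtain ⟨v, _, hv⟩ := Finset.exists_mem_eq_sup Finset.univ Finset.univ_nonempty
      (fun v : V => {w | G.Reachable v w}.ncard)
    have hvn : (Finset.univ.filter (fun w => G.Reachable v w)).card = n := by
      rw [← hncard, hn, hv]
    set C : Finset V := Finset.univ.filter (fun w => G.Reachable v w) with hC
    have hsepC : ∀ a ∈ C, ∀ b ∈ C, a ≠ b →
        k 1 ≤ Int.natAbs ((g a : ℤ) - (g b : ℤ)) := by
      intro a ha b hb hab
      simp only [hC, Finset.mem_filter, Finset.mem_univ, true_and] at ha hb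
      have hadj : G.Adj a b := (h a b (ha.symm.trans hb)).resolve_left hab
      exact hg a b 1 le_rfl hℓ (SimpleGraph.dist_eq_one_iff_adj.2 hadj)
    have hinj : Set.InjOn g ↑C := by
      intro a ha b hb hgab
      by_contra hab
      have := hsepC a ha b hb hab
      omega
    have hTcard : (C.image g).card = n := by
      rw [Finset.card_image_of_injOn hinj, hvn]
    have hvC : v ∈ C := Finset.mem_filter.2 ⟨Finset.mem_univ v, Reachable.refl v⟩
    have hTne : (C.image g).Nonempty := ⟨g v, Finset.mem_image.2 ⟨v, hvC, rfl⟩⟩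
    have hTsep : ∀ a ∈ C.image g, ∀ b ∈ C.image g, a ≠ b →
        k 1 ≤ Int.natAbs ((a : ℤ) - b) := by
      intro a ha b hb hab
      obtain ⟨a', ha', rfl⟩ := Finset.mem_image.1 ha
      obtain ⟨b', hb', rfl⟩ := Finset.mem_image.1 hb
      exact hsepC a' ha' b' hb' (fun hE => hab (by rw [hE]))
    have hchain := chainA (k 1) (C.image g) hTne hTsep
    rw [hTcard] at hchain
    -- extremal vertices
    obtain ⟨a, ha, hga⟩ := Finset.mem_image.1 ((C.image g).max'_mem hTne)
    obtain ⟨b, hb, hgb⟩ := Finset.mem_image.1 ((C.image g).min'_mem hTne)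
    have hspan_ge : g a - g b ≤ minSpan G k ℓ := by
      calc g a - g b ≤ Finset.univ.sup fun w : V => g a - g w :=
            Finset.le_sup (f := fun w : V => g a - g w) (Finset.mem_univ b)
        _ ≤ Finset.univ.sup fun u : V => Finset.univ.sup fun w : V => g u - g w :=
            Finset.le_sup (f := fun u : V => Finset.univ.sup fun w : V => g u - g w)
              (Finset.mem_univ a)
        _ = minSpan G k ℓ := hgspan
    omega
  omega
end

section
/- A finite undirected graph Γ is a disjoint union of complete graphs if and only if there exist a function F:ℕ→ℕ and an integer ℓ > 1 such that for all positive integers k₁,…,k_ℓ, λ_{k₁,…,k_ℓ}(Γ) = F(k₁). -/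
open SimpleGraph

/-- If a graph is not a disjoint union of cliques, it contains a pair at distance 2. -/
lemma exists_dist_two {V : Type*} (G : SimpleGraph V)
    (h : ¬ ∀ u v : V, G.Reachable u v → u = v ∨ G.Adj u v) :
    ∃ x y : V, G.dist x y = 2 := by
  classical
  push_neg at h
  obtain ⟨u, v, hr, hne, hadj⟩ := h
  obtain ⟨p⟩ := hr
  have hex : ∃ i, ¬ (u = p.getVert i ∨ G.Adj u (p.getVert i)) := by
    refine ⟨p.length, ?_⟩
    rw [p.getVert_length]
    tauto
  set i := Nat.find hex with hi
  have hspec : ¬ (u = p.getVert i ∨ G.Adj u (p.getVert i)) := Nat.find_spec hex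
  have hi0 : i ≠ 0 := by
    intro h0
    rw [h0] at hspec
    simp [Walk.getVert_zero] at hspec
  have hile : i ≤ p.length := by
    apply Nat.find_min' hex
    rw [p.getVert_length]
    tauto
  have hprev : u = p.getVert (i - 1) ∨ G.Adj u (p.getVert (i - 1)) := by
    by_contra hc
    exact absurd (Nat.find_min hex (by omega : i - 1 < i)) (by simpa using hc)
  have hedge : G.Adj (p.getVert (i - 1)) (p.getVert i) := by
    have := p.adj_getVert_succ (i := i - 1) (by omega)
    rwa [show i - 1 + 1 = i by omega] at this
  have huadj : G.Adj u (p.getVert (i - 1)) := by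
    rcases hprev with h1 | h1
    · have h2 := hedge
      rw [← h1] at h2
      exact absurd (Or.inr h2) hspec
    · exact h1
  refine ⟨u, p.getVert i, ?_⟩
  have hle : G.dist u (p.getVert i) ≤ 2 := by
    have := SimpleGraph.dist_le (Walk.cons huadj (Walk.cons hedge Walk.nil))
    simpa using this
  have hne0 : G.dist u (p.getVert i) ≠ 0 := by
    rw [ne_eq, SimpleGraph.dist_eq_zero_iff_eq_or_not_reachable]
    push_neg
    refine ⟨fun h1 => hspec (Or.inl h1), ⟨Walk.cons huadj (Walk.cons hedge Walk.nil)⟩⟩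
  have hne1 : G.dist u (p.getVert i) ≠ 1 := by
    rw [ne_eq, SimpleGraph.dist_eq_one_iff_adj]
    intro h1
    exact hspec (Or.inr h1)
  omega

theorem stmt4 {V : Type*} [Fintype V] (G : SimpleGraph V) :
    (∀ u v : V, G.Reachable u v → u = v ∨ G.Adj u v) ↔
    ∃ (F : ℕ → ℕ) (ℓ : ℕ), 1 < ℓ ∧
      ∀ k : ℕ → ℕ, (∀ t, 1 ≤ t → t ≤ ℓ → 1 ≤ k t) → minSpan G k ℓ = F (k 1) := by
  classical
  constructor
  · intro h
    refine ⟨fun m => minSpan G (fun _ => m) 2, 2, one_lt_two, fun k _ => ?_⟩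
    have hkey : ∀ f : V → ℕ, IsLLabelling G k 2 f ↔ IsLLabelling G (fun _ => k 1) 2 f := by
      intro f
      have forced : ∀ u v : V, ∀ t : ℕ, 1 ≤ t → G.dist u v = t → t = 1 := by
        intro u v t ht hd
        have hne0 : G.dist u v ≠ 0 := by omega
        rw [ne_eq, SimpleGraph.dist_eq_zero_iff_eq_or_not_reachable] at hne0
        push_neg at hne0
        rcases h u v hne0.2 with h1 | h1
        · exact absurd h1 hne0.1
        · rw [← hd, SimpleGraph.dist_eq_one_iff_adj]; exact h1
      constructor
      · intro hf u v t ht htl hd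
        have := forced u v t ht hd
        subst this
        exact hf u v 1 le_rfl (by norm_num) hd
      · intro hf u v t ht htl hd
        have h1 := forced u v t ht hd
        subst h1
        exact hf u v 1 le_rfl (by norm_num) hd
    unfold minSpan
    congr 1
    ext s
    constructor
    · rintro ⟨f, hf, hs⟩; exact ⟨f, (hkey f).mp hf, hs⟩
    · rintro ⟨f, hf, hs⟩; exact ⟨f, (hkey f).mpr hf, hs⟩
  · rintro ⟨F, ℓ, hℓ, hF⟩
    by_contra hc
    obtain ⟨x, y, hxy⟩ := exists_dist_two G hc
    set k : ℕ → ℕ := fun t => if t = 2 then F 1 + 1 else 1 with hk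
    have hkpos : ∀ t, 1 ≤ t → t ≤ ℓ → 1 ≤ k t := by
      intro t _ _; simp only [hk]; split <;> omega
    have hk1 : k 1 = 1 := by simp [hk]
    have hmin := hF k hkpos
    rw [hk1] at hmin
    -- the defining set is nonempty
    have hne : {s | ∃ f : V → ℕ, IsLLabelling G k ℓ f ∧
        (Finset.univ.sup fun u : V => Finset.univ.sup fun v : V => f u - f v) = s}.Nonempty := by
      refine ⟨_, fun v => ((Fintype.equivFin V) v : ℕ) * (F 1 + 1), ?_, rfl⟩
      intro u v t ht htl hd
      have huv : u ≠ v := by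
        intro h1; subst h1; rw [SimpleGraph.dist_self] at hd; omega
      have heuv : ((Fintype.equivFin V u : ℕ) : ℤ) ≠ ((Fintype.equivFin V v : ℕ) : ℤ) := by
        intro h1
        exact huv ((Fintype.equivFin V).injective (Fin.ext (by exact_mod_cast h1)))
      have hM1 : F 1 + 1 ≤ ((((Fintype.equivFin V u : ℕ) * (F 1 + 1) : ℕ) : ℤ)
          - (((Fintype.equivFin V v : ℕ) * (F 1 + 1) : ℕ) : ℤ)).natAbs := by
        push_cast
        rw [← sub_mul, Int.natAbs_mul]
        have h1 : 1 ≤ (((Fintype.equivFin V u : ℕ) : ℤ)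
            - ((Fintype.equivFin V v : ℕ) : ℤ)).natAbs := by omega
        calc F 1 + 1 = 1 * (F 1 + 1) := (one_mul _).symm
          _ ≤ _ := Nat.mul_le_mul h1 (by omega)
      refine le_trans ?_ hM1
      simp only [hk]; split <;> omega
    have hmem := Nat.sInf_mem hne
    obtain ⟨f, hf, hs⟩ := hmem
    have hk2 : F 1 + 1 ≤ ((f x : ℤ) - (f y : ℤ)).natAbs := by
      have := hf x y 2 (by norm_num) hℓ hxy
      simpa [hk] using this
    have hle1 : f x - f y ≤ Finset.univ.sup fun u : V =>
        Finset.univ.sup fun v : V => f u - f v := by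
      have h1 := Finset.le_sup (f := fun v : V => f x - f v) (Finset.mem_univ y)
      have h2 := Finset.le_sup (f := fun u : V => Finset.univ.sup fun v : V => f u - f v)
        (Finset.mem_univ x)
      exact le_trans h1 h2
    have hle2 : f y - f x ≤ Finset.univ.sup fun u : V =>
        Finset.univ.sup fun v : V => f u - f v := by
      have h1 := Finset.le_sup (f := fun v : V => f y - f v) (Finset.mem_univ x)
      have h2 := Finset.le_sup (f := fun u : V => Finset.univ.sup fun v : V => f u - f v)
        (Finset.mem_univ y)
      exact le_trans h1 h2
    have hfinal : (Finset.univ.sup fun u : V =>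
        Finset.univ.sup fun v : V => f u - f v) = F 1 := by
      unfold minSpan at hmin
      exact hs.trans hmin
    set S := Finset.univ.sup fun u : V => Finset.univ.sup fun v : V => f u - f v with hS
    clear_value S
    clear hS hs hmin hf hne hkpos hk1 hF hk
    omega
end

section
/- A periodic semigroup S is right simple and left cancellative (i.e., a right group) if and only if S is isomorphic to the direct product of a right zero band and a group. -/
/-- `spow g n` is the power `g ^ (n + 1)` in a semigroup. -/
def spow {S : Type*} [Semigroup S] (g : S) : ℕ → S
  | 0 => g
  | n + 1 => spow g n * g

universe u

section Aux

variable {S : Type u} [Semigroup S]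

lemma spow_add (g : S) (a b : ℕ) : spow g a * spow g b = spow g (a + b + 1) := by
  induction b with
  | zero => rfl
  | succ b ih =>
      show spow g a * (spow g b * g) = _
      rw [← mul_assoc, ih]
      show spow g (a + b + 1 + 1) = spow g (a + (b + 1) + 1)
      congr 1

lemma spow_comm (g : S) (n : ℕ) : g * spow g n = spow g n * g := by
  have h1 := spow_add g 0 n
  have h2 := spow_add g n 0
  simp only [Nat.zero_add, Nat.add_zero] at h1 h2
  exact (h1.trans h2.symm)

lemma spow_period (g : S) (m p : ℕ) (h : spow g m = spow g (m + p)) :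
    ∀ k, spow g (m + k) = spow g (m + k + p) := by
  intro k
  induction k with
  | zero => simpa using h
  | succ k ih =>
      have : spow g (m + k + 1) = spow g (m + k) * g := rfl
      rw [show m + (k+1) = m + k + 1 by omega, this, ih]
      show spow g (m + k + p) * g = _
      show spow g (m + k + p + 1) = spow g (m + k + 1 + p)
      congr 1
      omega

lemma spow_period_mul (g : S) (m p : ℕ) (h : spow g m = spow g (m + p)) :
    ∀ k t, spow g (m + k) = spow g (m + k + t * p) := by
  intro k t
  induction t with
  | zero => simp
  | succ t ih =>
      rw [ih]
      have := spow_period g m p h (k + t * p)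
      rw [show m + k + t * p = m + (k + t * p) by omega, this]
      congr 1
      ring

lemma spow_exists_idem (g : S) (h : ∃ m n : ℕ, spow g m = spow g (m + n + 1)) :
    ∃ k, spow g k * spow g k = spow g k := by
  obtain ⟨m, n, h⟩ := h
  set k := m + (m * n + n) with hk
  refine ⟨k, ?_⟩
  rw [spow_add]
  have key := spow_period_mul g m (n + 1) (by rw [show m + (n+1) = m + n + 1 by omega]; exact h)
    (m * n + n) (m + 1)
  rw [show k + k + 1 = m + (m * n + n) + (m + 1) * (n + 1) by rw [hk]; ring]
  exact key.symm

end Aux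

theorem stmt16 {S : Type u} [Semigroup S]
    (hper : ∀ g : S, ∃ m n : ℕ, spow g m = spow g (m + n + 1)) :
    ((∀ I : Set S, (∀ a ∈ I, ∀ s : S, a * s ∈ I) → I.Nonempty → I = Set.univ) ∧
        (∀ x y z : S, x * y = x * z → y = z)) ↔
      ∃ (R G : Type u) (_ : Semigroup R) (_ : Group G),
        (∀ x y : R, x * y = y) ∧ Nonempty (S ≃* R × G) := by
  constructor
  · rintro ⟨hrs, hlc⟩
    rcases isEmpty_or_nonempty S with hE | ⟨⟨g0⟩⟩
    · -- S is empty
      refine ⟨S, PUnit.{u+1}, inferInstance, inferInstance,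
        fun x y => (hE.elim x), ⟨?_⟩⟩
      exact
        { toFun := fun s => (s, PUnit.unit)
          invFun := Prod.fst
          left_inv := fun _ => rfl
          right_inv := fun p => rfl
          map_mul' := fun a b => rfl }
    · -- idempotents are left identities
      have hli : ∀ f : S, f * f = f → ∀ s : S, f * s = s := by
        intro f hf s
        have hI : {x : S | ∃ t, x = f * t} = Set.univ := by
          refine hrs _ ?_ ⟨f, f, hf.symm⟩
          rintro a ⟨t, rfl⟩ u
          exact ⟨t * u, mul_assoc f t u⟩
        have hs : s ∈ {x : S | ∃ t, x = f * t} := hI ▸ Set.mem_univ s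
        obtain ⟨t, rfl⟩ := hs
        rw [← mul_assoc, hf]
      obtain ⟨k0, hk0⟩ := spow_exists_idem g0 (hper g0)
      set e := spow g0 k0 with he_def
      have he : e * e = e := hk0
      -- helper: if x * e = x then spow x k * e = spow x k
      have hspow_e : ∀ x : S, x * e = x → ∀ k, spow x k * e = spow x k := by
        intro x hx k
        induction k with
        | zero => exact hx
        | succ k ih =>
            show (spow x k * x) * e = spow x k * x
            rw [mul_assoc, hx]
      -- existence of inverses in G
      have hinv : ∀ a : S, a * e = a → ∃ b : S, b * e = b ∧ b * a = e ∧ a * b = e := by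
        intro a ha
        obtain ⟨k, hk⟩ := spow_exists_idem a (hper a)
        have hfe : spow a k = e := by
          have h1 : spow a k * e = e := hli _ hk e
          have h2 : spow a k * e = spow a k := hspow_e a ha k
          exact h2.symm.trans h1
        cases k with
        | zero =>
            have ha' : a = e := hfe
            exact ⟨e, he, by rw [ha']; exact he, by rw [ha']; exact he⟩
        | succ j =>
            refine ⟨spow a j, hspow_e a ha j, hfe, ?_⟩
            rw [spow_comm]
            exact hfe
      -- define the types
      set E := {x : S // x * x = x} with hE_def
      set G := {x : S // x * e = x} with hG_def
      letI iE : Semigroup E := { mul := fun _ y => y, mul_assoc := fun _ _ _ => rfl }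
      letI iG : Group G :=
        { mul := fun x y => ⟨x.1 * y.1, by rw [mul_assoc, y.2]⟩
          mul_assoc := fun a b c => Subtype.ext (mul_assoc a.1 b.1 c.1)
          one := ⟨e, he⟩
          one_mul := fun a => Subtype.ext (hli e he a.1)
          mul_one := fun a => Subtype.ext a.2
          inv := fun a => ⟨(hinv a.1 a.2).choose, (hinv a.1 a.2).choose_spec.1⟩
          inv_mul_cancel := fun a => Subtype.ext (hinv a.1 a.2).choose_spec.2.1 }
      refine ⟨E, G, iE, iG, fun x y => rfl, ⟨?_⟩⟩
      -- chosen idempotent power for each s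
      let fs : S → S := fun s => spow s (spow_exists_idem s (hper s)).choose
      have hfs : ∀ s : S, fs s * fs s = fs s := fun s => (spow_exists_idem s (hper s)).choose_spec
      have hsfs : ∀ s : S, s * fs s = s := by
        intro s
        show s * spow s _ = s
        rw [spow_comm]
        exact hli (fs s) (hfs s) s
      let ψfun : E × G → S := fun p => p.2.1 * p.1.1
      have hinj : Function.Injective ψfun := by
        rintro ⟨f, a⟩ ⟨f', a'⟩ h
        simp only [ψfun] at h
        have hfe : f.1 * e = e := hli f.1 f.2 e
        have hfe' : f'.1 * e = e := hli f'.1 f'.2 e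
        have ha : a.1 = a'.1 := by
          have := congrArg (· * e) h
          change a.1 * f.1 * e = a'.1 * f'.1 * e at this
          rw [mul_assoc, mul_assoc, hfe, hfe', a.2, a'.2] at this
          exact this
        rw [ha] at h
        have hf : f.1 = f'.1 := hlc a'.1 f.1 f'.1 h
        exact Prod.ext (Subtype.ext hf) (Subtype.ext ha)
      have hsurj : Function.Surjective ψfun := by
        intro s
        refine ⟨(⟨fs s, hfs s⟩, ⟨s * e, by rw [mul_assoc, he]⟩), ?_⟩
        show (s * e) * fs s = s
        rw [mul_assoc, hli e he (fs s), hsfs]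
      exact
        (MulEquiv.mk (Equiv.ofBijective ψfun ⟨hinj, hsurj⟩)
          (by
            rintro ⟨f, a⟩ ⟨f', a'⟩
            show a.1 * a'.1 * f'.1 = (a.1 * f.1) * (a'.1 * f'.1)
            rw [mul_assoc a.1 f.1, ← mul_assoc f.1, hli f.1 f.2 a'.1, ← mul_assoc])).symm
  · rintro ⟨R, G, iR, iG, hrz, ⟨φ⟩⟩
    constructor
    · intro I hI ⟨a, haI⟩
      apply Set.eq_univ_iff_forall.mpr
      intro s
      have key : a * φ.symm ((φ s).1, ((φ a).2)⁻¹ * (φ s).2) = s := by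
        apply φ.injective
        rw [map_mul, MulEquiv.apply_symm_apply]
        refine Prod.ext ?_ ?_
        · exact hrz _ _
        · exact mul_inv_cancel_left _ _
      rw [← key]
      exact hI a haI _
    · intro x y z h
      have h' := congrArg φ h
      rw [map_mul, map_mul] at h'
      have h1 : (φ x).1 * (φ y).1 = (φ x).1 * (φ z).1 := congrArg Prod.fst h'
      rw [hrz, hrz] at h1
      have h2 : (φ x).2 * (φ y).2 = (φ x).2 * (φ z).2 := congrArg Prod.snd h'
      apply φ.injective
      exact Prod.ext h1 (mul_left_cancel h2)
end
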